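/- (Deterrence effect, Proposition 3.) Assume (θ_H − θ_L)·c_h > θ_H·v − c > 0. Define S(τ̂) = μ((0, τ̂·θ_H·z]), D(τ̂) = (θ_H − θ_L)·c_h − ∫ max(θ_H·v − c − y·S(τ̂), 0) dμ(y), and r(τ̂) = (ν × ν)({(β₁, β₂) : β₁ + β₂ < 2u/D(τ̂)}). Then for all 0 ≤ τ̂₁ ≤ τ̂₂: S(τ̂₁) ≤ S(τ̂₂), D(τ̂₁) ≤ D(τ̂₂) with both strictly positive, and r(τ̂₂) ≤ r(τ̂₁): an increase in perceived HIV transmission risk weakly raises the stigma level, which weakly widens the continuation-value gap and weakly decreases the proportion of high-risk individuals in the population. -/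

import Mathlib

/-!
A higher perceived risk `τ̂` enlarges the interval `(0, τ̂ θ_H z]`, so the stigma level `S` rises.
Since valuations `y` are positive, each integrand `max (θ_H v − c − y S) 0` falls as `S` rises,
and it never exceeds `max (θ_H v − c) 0`; hence the gap `D` rises and stays above
`(θ_H − θ_L) c_h − max (θ_H v − c) 0 > 0`. A larger positive gap shrinks the threshold `2u / D`,
and with it the set of pairs `(β₁, β₂)` counted by `r`.
-/

open MeasureTheory

/-- The stigma level `S(τ̂) = μ((0, τ̂·θ_H·z])`. -/
noncomputable def stigma (μ : Measure ℝ) (θH z τ : ℝ) : ℝ :=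
  (μ (Set.Ioc 0 (τ * θH * z))).toReal

/-- The expected continuation-value gap at perceived risk τ̂:
`D(τ̂) = (θ_H − θ_L)·c_h − ∫ max(θ_H·v − c − y·S(τ̂), 0) dμ(y)`. -/
noncomputable def gapD (μ : Measure ℝ) (θL θH v c ch z τ : ℝ) : ℝ :=
  (θH - θL) * ch - ∫ y, max (θH * v - c - y * stigma μ θH z τ) 0 ∂μ

/-- The fraction of high-risk individuals
`r(τ̂) = (ν × ν)({β₁ + β₂ < 2u/D(τ̂)})`. -/
noncomputable def highRiskFraction (μ ν : Measure ℝ) (θL θH v c ch z u τ : ℝ) :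
    ENNReal :=
  (ν.prod ν) {p : ℝ × ℝ | p.1 + p.2 < 2 * u / gapD μ θL θH v c ch z τ}

open Set

section ExpectedShortfall

variable {μ : Measure ℝ} {A : ℝ}

lemma integrable_max_sub_mul [IsFiniteMeasure μ] (hy : ∀ᵐ y ∂μ, 0 ≤ y) {s : ℝ} (hs : 0 ≤ s) :
    Integrable (fun y ↦ max (A - y * s) 0) μ := by
  refine (integrable_const (max A 0)).mono' (by fun_prop) ?_
  filter_upwards [hy] with y hy
  rw [Real.norm_of_nonneg (le_max_right _ _)]
  exact max_le_max_right 0 (sub_le_self A (mul_nonneg hy hs))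

lemma antitoneOn_integral_max_sub_mul [IsFiniteMeasure μ] (hy : ∀ᵐ y ∂μ, 0 ≤ y) :
    AntitoneOn (fun s ↦ ∫ y, max (A - y * s) 0 ∂μ) (Ici 0) := by
  intro s (hs : 0 ≤ s) t (ht : 0 ≤ t) hst
  refine integral_mono_ae (integrable_max_sub_mul hy ht) (integrable_max_sub_mul hy hs) ?_
  filter_upwards [hy] with y hy
  exact max_le_max_right 0 (sub_le_sub_left (mul_le_mul_of_nonneg_left hst hy) A)

lemma integral_max_sub_mul_le [IsProbabilityMeasure μ] (hy : ∀ᵐ y ∂μ, 0 ≤ y) {s : ℝ}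
    (hs : 0 ≤ s) : ∫ y, max (A - y * s) 0 ∂μ ≤ max A 0 := by
  simpa using antitoneOn_integral_max_sub_mul (A := A) hy self_mem_Ici hs hs

end ExpectedShortfall

section Deterrence

variable {μ : Measure ℝ} {θL θH v c ch z : ℝ}

lemma stigma_nonneg (μ : Measure ℝ) (θH z τ : ℝ) : 0 ≤ stigma μ θH z τ :=
  ENNReal.toReal_nonneg

lemma stigma_mono [IsFiniteMeasure μ] (hθH : 0 ≤ θH) (hz : 0 ≤ z) :
    Monotone (stigma μ θH z) := fun _ _ hτ ↦
  ENNReal.toReal_mono (measure_ne_top μ _) <| measure_mono <| Ioc_subset_Ioc_right <|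
    mul_le_mul_of_nonneg_right (mul_le_mul_of_nonneg_right hτ hθH) hz

lemma gapD_pos [IsProbabilityMeasure μ] (hy : ∀ᵐ y ∂μ, 0 ≤ y)
    (hA : θH * v - c < (θH - θL) * ch) (hgain : 0 < (θH - θL) * ch) (τ : ℝ) :
    0 < gapD μ θL θH v c ch z τ := by
  have := integral_max_sub_mul_le (A := θH * v - c) hy (stigma_nonneg μ θH z τ)
  have := max_lt hA hgain
  unfold gapD
  linarith

lemma gapD_mono [IsFiniteMeasure μ] (hy : ∀ᵐ y ∂μ, 0 ≤ y) (hθH : 0 ≤ θH) (hz : 0 ≤ z) :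
    Monotone (gapD μ θL θH v c ch z) := fun τ₁ τ₂ hτ ↦
  sub_le_sub_left (antitoneOn_integral_max_sub_mul hy (stigma_nonneg μ θH z τ₁)
    (stigma_nonneg μ θH z τ₂) (stigma_mono hθH hz hτ)) _

lemma highRiskFraction_le_of_gapD_le (ν : Measure ℝ) {u τ₁ τ₂ : ℝ} (hu : 0 ≤ u)
    (hD₁ : 0 < gapD μ θL θH v c ch z τ₁)
    (hD : gapD μ θL θH v c ch z τ₁ ≤ gapD μ θL θH v c ch z τ₂) :
    highRiskFraction μ ν θL θH v c ch z u τ₂ ≤ highRiskFraction μ ν θL θH v c ch z u τ₁ :=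
  measure_mono fun _ hp ↦
    lt_of_lt_of_le hp (div_le_div_of_nonneg_left (mul_nonneg zero_le_two hu) hD₁ hD)

end Deterrence

theorem deterrence_effect_general
    (μ ν : Measure ℝ) [IsProbabilityMeasure μ]
    (hμ : μ (Set.Ioi (0 : ℝ)) = 1)
    (θL θH v c ch z u : ℝ)
    (hθL : 0 < θL) (hθLH : θL < θH)
    (hch : 0 < ch) (hz : 0 < z) (hu : 0 < u)
    (hA3 : θH * v - c < (θH - θL) * ch)
    (τ₁ τ₂ : ℝ) (hτ₁₂ : τ₁ ≤ τ₂) :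
    stigma μ θH z τ₁ ≤ stigma μ θH z τ₂ ∧
    0 < gapD μ θL θH v c ch z τ₁ ∧
    0 < gapD μ θL θH v c ch z τ₂ ∧
    gapD μ θL θH v c ch z τ₁ ≤ gapD μ θL θH v c ch z τ₂ ∧
    highRiskFraction μ ν θL θH v c ch z u τ₂
      ≤ highRiskFraction μ ν θL θH v c ch z u τ₁ := by
  have hθH : 0 ≤ θH := (hθL.trans hθLH).le
  have hy : ∀ᵐ y ∂μ, 0 ≤ y := by
    have : ∀ᵐ y ∂μ, y ∈ Ioi (0 : ℝ) :=
      (ae_mem_iff_measure_eq measurableSet_Ioi.nullMeasurableSet).2 (by rw [hμ, measure_univ])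
    filter_upwards [this] with y hy using le_of_lt hy
  have hgain : 0 < (θH - θL) * ch := mul_pos (sub_pos.2 hθLH) hch
  have hD₁ := gapD_pos (z := z) hy hA3 hgain τ₁
  have hD := gapD_mono (θL := θL) (v := v) (c := c) (ch := ch) hy hθH hz.le hτ₁₂
  exact ⟨stigma_mono hθH hz.le hτ₁₂, hD₁, gapD_pos hy hA3 hgain τ₂, hD,
    highRiskFraction_le_of_gapD_le ν hu.le hD₁ hD⟩

/-- Deterrence effect, Proposition 3: for `0 ≤ τ̂₁ ≤ τ̂₂`,
`S(τ̂₁) ≤ S(τ̂₂)`, the gaps `D(τ̂₁) ≤ D(τ̂₂)` are strictly positive, and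
`r(τ̂₂) ≤ r(τ̂₁)`. -/
theorem deterrence_effect
    (μ ν : Measure ℝ) [IsProbabilityMeasure μ] [IsProbabilityMeasure ν]
    (hμ : μ (Set.Ioi (0 : ℝ)) = 1) (hν : ν (Set.Ioo (0 : ℝ) 1) = 1)
    (θL θH v c ch z u : ℝ)
    (hθL : 0 < θL) (hθLH : θL < θH) (hθH : θH < 1)
    (hv : 0 < v) (hc : 0 < c)
    (hA1L : θL * v < c) (hA1H : c < θH * v)
    (hch : 0 < ch) (hz : 0 < z) (hu : 0 < u)
    (hA3 : θH * v - c < (θH - θL) * ch)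
    (τ₁ τ₂ : ℝ) (hτ₁ : 0 ≤ τ₁) (hτ₁₂ : τ₁ ≤ τ₂) :
    stigma μ θH z τ₁ ≤ stigma μ θH z τ₂ ∧
    0 < gapD μ θL θH v c ch z τ₁ ∧
    0 < gapD μ θL θH v c ch z τ₂ ∧
    gapD μ θL θH v c ch z τ₁ ≤ gapD μ θL θH v c ch z τ₂ ∧
    highRiskFraction μ ν θL θH v c ch z u τ₂
      ≤ highRiskFraction μ ν θL θH v c ch z u τ₁ :=
  deterrence_effect_general μ ν hμ θL θH v c ch z u hθL hθLH hch hz hu hA3 τ₁ τ₂ hτ₁₂
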